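/- Let Ω ⊆ ℝ^N be a bounded measurable set, 0 < σ < 1, and u : ℝ^N → ℝ a σ-Hölder continuous function vanishing outside Ω, with Hölder seminorm |u|_σ. If u belongs to W^{σ,q} for some q > 1 (i.e. [u]_{σ,q} < ∞), then [u]_{σ,p} < ∞ for all p ≥ q and lim_{p→∞} [u]_{σ,p} = |u|_σ, where [u]_{σ,p} = (∫_{ℝ^N}∫_{ℝ^N} |u(x)-u(y)|^p/|x-y|^{N+σp} dx dy)^{1/p}. -/

import Mathlib

/-!
A `σ`-Hölder bound `|u x - u y| ≤ H |x - y|^σ` lets one trade powers of the difference quotient: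
the `p`-th Gagliardo integral is at most `H^(p-q)` times the `q`-th one, which gives finiteness
for `p ≥ q` and `limsup [u]_{σ,p} ≤ H`. Conversely, if `c < |u|_σ` then some pair `(x₀, y₀)` has
difference quotient above `c`, hence so does every pair in a small product of balls around it;
integrating over that product bounds the `p`-th integral below by `c^p` times a positive constant,
so `liminf [u]_{σ,p} ≥ c`.
-/

open Metric MeasureTheory Filter
open scoped ENNReal Topology

namespace Real

lemma tendsto_rpow_sub_mul_rpow_one_div {H : ℝ} (hH : 0 ≤ H) (q : ℝ) {M : ℝ} (hM : 0 < M) :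
    Tendsto (fun p : ℝ => (H ^ (p - q) * M) ^ (1 / p)) atTop (𝓝 H) := by
  have hinv : Tendsto (fun p : ℝ => 1 / p) atTop (𝓝 0) := tendsto_const_nhds.div_atTop tendsto_id
  have hexp : Tendsto (fun p : ℝ => (p - q) * (1 / p)) atTop (𝓝 1) := by
    have : Tendsto (fun p : ℝ => 1 - q * (1 / p)) atTop (𝓝 (1 - q * 0)) :=
      tendsto_const_nhds.sub (hinv.const_mul q)
    rw [mul_zero, sub_zero] at this
    refine this.congr' ?_
    filter_upwards [eventually_ne_atTop 0] with p hp
    field_simp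
  have hlim := ((continuousAt_const_rpow' (a := H) one_ne_zero).tendsto.comp hexp).mul
    ((continuousAt_const_rpow hM.ne').tendsto.comp hinv)
  rw [rpow_one, rpow_zero, mul_one] at hlim
  refine hlim.congr' (Eventually.of_forall fun p => ?_)
  simp only [Function.comp_apply]
  rw [mul_rpow (rpow_nonneg hH _) hM.le, ← rpow_mul hH]

lemma rpow_div_rpow_le_mul_rpow_div_rpow {a d H s σ p q : ℝ} (ha : 0 ≤ a) (hd : 0 < d)
    (haH : a ≤ H * d ^ σ) (hq : 0 < q) (hqp : q ≤ p) :
    a ^ p / d ^ (s + σ * p) ≤ H ^ (p - q) * (a ^ q / d ^ (s + σ * q)) := by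
  have hdσ : 0 < d ^ σ := rpow_pos_of_pos hd σ
  have hsplit : a ^ p / d ^ (s + σ * p) = (a / d ^ σ) ^ (p - q) * (a ^ q / d ^ (s + σ * q)) := by
    rw [div_rpow ha hdσ.le, ← rpow_mul hd.le, div_mul_div_comm,
      ← rpow_add' ha (by linarith), ← rpow_add hd]
    ring_nf
  rw [hsplit]
  gcongr
  exact (div_le_iff₀ hdσ).2 haH

lemma mul_rpow_neg_le_rpow_div_rpow {a c d R s σ p : ℝ} (hc : 0 ≤ c) (hd : 0 < d)
    (hca : c * d ^ σ ≤ a) (hdR : d ≤ R) (hs : 0 ≤ s) (hp : 0 ≤ p) :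
    c ^ p * R ^ (-s) ≤ a ^ p / d ^ (s + σ * p) := by
  have hdσ : 0 < d ^ σ := rpow_pos_of_pos hd σ
  have ha : 0 ≤ a := (mul_nonneg hc hdσ.le).trans hca
  have hsplit : a ^ p / d ^ (s + σ * p) = (a / d ^ σ) ^ p * d ^ (-s) := by
    rw [div_rpow ha hdσ.le, ← rpow_mul hd.le, rpow_add hd, rpow_neg hd.le]
    field_simp
  have hR : 0 < R := hd.trans_le hdR
  rw [hsplit]
  exact mul_le_mul (rpow_le_rpow hc ((le_div_iff₀ hdσ).2 hca) hp)
    (rpow_le_rpow_of_nonpos hd hdR (neg_nonpos.2 hs)) (by positivity) (by positivity)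

end Real

lemma mul_measure_mul_measure_le_lintegral_lintegral {α β : Type*} [MeasurableSpace α]
    [MeasurableSpace β] {μ : Measure α} {ν : Measure β} {f : α → β → ℝ≥0∞} {A : Set α}
    {B : Set β} (hA : MeasurableSet A) (hB : MeasurableSet B) {C : ℝ≥0∞}
    (h : ∀ x ∈ A, ∀ y ∈ B, C ≤ f x y) :
    C * ν B * μ A ≤ ∫⁻ x, ∫⁻ y, f x y ∂ν ∂μ :=
  calc C * ν B * μ A = ∫⁻ _ in A, ∫⁻ _ in B, C ∂ν ∂μ := by simp only [setLIntegral_const]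
    _ ≤ ∫⁻ x in A, ∫⁻ y in B, f x y ∂ν ∂μ :=
      setLIntegral_mono' hA fun x hx => setLIntegral_mono' hB (h x hx)
    _ ≤ ∫⁻ x in A, ∫⁻ y, f x y ∂ν ∂μ := lintegral_mono fun _ => setLIntegral_le_lintegral _ _
    _ ≤ ∫⁻ x, ∫⁻ y, f x y ∂ν ∂μ := setLIntegral_le_lintegral _ _

section Gagliardo

variable {X : Type*} [PseudoMetricSpace X]

/-- The `p`-th power of the Gagliardo seminorm `[u]_{σ,p}` when `s = N` and `μ` is Lebesgue
measure. -/
noncomputable def gagliardoIntegral [MeasurableSpace X] (μ : Measure X) (u : X → ℝ)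
    (s σ p : ℝ) : ℝ≥0∞ :=
  ∫⁻ x, ∫⁻ y, ENNReal.ofReal (|u x - u y| ^ p / dist x y ^ (s + σ * p)) ∂μ ∂μ

/-- The Hölder seminorm `|u|_σ`; it is `0` when the set of difference quotients is unbounded. -/
noncomputable def holderSeminorm (u : X → ℝ) (σ : ℝ) : ℝ :=
  sSup {r : ℝ | ∃ x y, x ≠ y ∧ r = |u x - u y| / dist x y ^ σ}

lemma holderSeminorm_nonneg (u : X → ℝ) (σ : ℝ) : 0 ≤ holderSeminorm u σ :=
  Real.sSup_nonneg (by rintro _ ⟨x, y, -, rfl⟩; positivity)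

lemma exists_mul_rpow_lt_of_lt_holderSeminorm {u : X → ℝ} {σ c : ℝ} (hc : 0 ≤ c)
    (h : c < holderSeminorm u σ) : ∃ x y, c * dist x y ^ σ < |u x - u y| := by
  have hne : {r : ℝ | ∃ x y, x ≠ y ∧ r = |u x - u y| / dist x y ^ σ}.Nonempty :=
    Set.nonempty_iff_ne_empty.2 fun he => by
      rw [holderSeminorm, he, Real.sSup_empty] at h
      linarith
  obtain ⟨_, ⟨x, y, -, rfl⟩, hr⟩ := exists_lt_of_lt_csSup hne h
  have hd : 0 < dist x y ^ σ := (Real.rpow_nonneg dist_nonneg σ).lt_of_ne fun h0 => by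
    rw [← h0, div_zero] at hr
    linarith
  exact ⟨x, y, (lt_div_iff₀ hd).1 hr⟩

variable {u : X → ℝ} {H σ : ℝ}

lemma continuous_of_abs_sub_le_mul_rpow (hσ : 0 < σ)
    (hH : ∀ x y, |u x - u y| ≤ H * dist x y ^ σ) : Continuous u := by
  refine continuous_iff_continuousAt.2 fun x => tendsto_iff_dist_tendsto_zero.2 ?_
  have hlim : Tendsto (fun y => H * dist y x ^ σ) (𝓝 x) (𝓝 (H * dist x x ^ σ)) :=
    ((continuous_id.dist continuous_const).rpow_const fun _ => Or.inr hσ.le).const_mul H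
      |>.tendsto x
  rw [dist_self, Real.zero_rpow hσ.ne', mul_zero] at hlim
  exact squeeze_zero (fun _ => dist_nonneg) (fun y => (Real.dist_eq _ _).trans_le (hH y x)) hlim

variable [MeasurableSpace X] (μ : Measure X) {s : ℝ}

lemma gagliardoIntegral_le_mul (hσ : 0 < σ) (hH : ∀ x y, |u x - u y| ≤ H * dist x y ^ σ) {p q : ℝ}
    (hq : 0 < q) (hqp : q ≤ p) :
    gagliardoIntegral μ u s σ p ≤ ENNReal.ofReal (H ^ (p - q)) * gagliardoIntegral μ u s σ q := by
  have hpoint : ∀ x y, ENNReal.ofReal (|u x - u y| ^ p / dist x y ^ (s + σ * p)) ≤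
      ENNReal.ofReal (H ^ (p - q)) *
        ENNReal.ofReal (|u x - u y| ^ q / dist x y ^ (s + σ * q)) := by
    intro x y
    rcases (dist_nonneg (x := x) (y := y)).eq_or_lt with hd | hd
    · have hxy : |u x - u y| = 0 := le_antisymm
        ((hH x y).trans_eq (by rw [← hd, Real.zero_rpow hσ.ne', mul_zero])) (abs_nonneg _)
      rw [hxy, Real.zero_rpow (hq.trans_le hqp).ne', zero_div, ENNReal.ofReal_zero]
      exact zero_le
    · rw [← ENNReal.ofReal_mul' (by positivity)]
      exact ENNReal.ofReal_le_ofReal <|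
        Real.rpow_div_rpow_le_mul_rpow_div_rpow (abs_nonneg _) hd (hH x y) hq hqp
  calc gagliardoIntegral μ u s σ p
      ≤ ∫⁻ x, ∫⁻ y, ENNReal.ofReal (H ^ (p - q)) *
          ENNReal.ofReal (|u x - u y| ^ q / dist x y ^ (s + σ * q)) ∂μ ∂μ :=
        lintegral_mono fun x => lintegral_mono fun y => hpoint x y
    _ = ENNReal.ofReal (H ^ (p - q)) * gagliardoIntegral μ u s σ q := by
        simp_rw [lintegral_const_mul' _ _ ENNReal.ofReal_ne_top, gagliardoIntegral]

lemma eventually_gagliardoIntegral_rpow_lt (hσ : 0 < σ) (hH₀ : 0 ≤ H)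
    (hH : ∀ x y, |u x - u y| ≤ H * dist x y ^ σ) {q : ℝ} (hq : 0 < q)
    (hJq : gagliardoIntegral μ u s σ q ≠ ⊤) {b : ℝ≥0∞} (hb : ENNReal.ofReal H < b) :
    ∀ᶠ p in atTop, gagliardoIntegral μ u s σ p ^ (1 / p) < b := by
  set M := (gagliardoIntegral μ u s σ q).toReal + 1
  have hM : 0 < M := by positivity
  have hJM : gagliardoIntegral μ u s σ q ≤ ENNReal.ofReal M := by
    rw [← ENNReal.ofReal_toReal hJq]
    exact ENNReal.ofReal_le_ofReal (by linarith)
  have hlim := (ENNReal.continuous_ofReal.tendsto H).comp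
    (Real.tendsto_rpow_sub_mul_rpow_one_div hH₀ q hM)
  filter_upwards [hlim.eventually (eventually_lt_nhds hb), eventually_ge_atTop q] with p hlt hqp
  refine lt_of_le_of_lt ?_ hlt
  have hp : 0 < p := hq.trans_le hqp
  rw [Function.comp_apply, ← ENNReal.ofReal_rpow_of_nonneg (by positivity) (by positivity),
    ENNReal.ofReal_mul (by positivity)]
  gcongr
  exact (gagliardoIntegral_le_mul μ hσ hH hq hqp).trans (by gcongr)

variable [OpensMeasurableSpace X] [μ.IsOpenPosMeasure]

lemma exists_pos_ofReal_mul_le_gagliardoIntegral (hσ : 0 < σ) (hs : 0 ≤ s)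
    (hH : ∀ x y, |u x - u y| ≤ H * dist x y ^ σ) {c : ℝ} (hc : 0 ≤ c) {x₀ y₀ : X}
    (h₀ : c * dist x₀ y₀ ^ σ < |u x₀ - u y₀|) :
    ∃ k : ℝ, 0 < k ∧ ∀ p, 0 ≤ p → ENNReal.ofReal (c ^ p * k) ≤ gagliardoIntegral μ u s σ p := by
  set R := dist x₀ y₀ + 1
  obtain ⟨η, hη, hball⟩ : ∃ η > 0, ∀ x ∈ ball x₀ η, ∀ y ∈ ball y₀ η,
      c * dist x y ^ σ < |u x - u y| ∧ dist x y < R := by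
    have hu := continuous_of_abs_sub_le_mul_rpow hσ hH
    have hdist : Continuous fun z : X × X => dist z.1 z.2 := continuous_fst.dist continuous_snd
    have hopen : IsOpen ({z : X × X | c * dist z.1 z.2 ^ σ < |u z.1 - u z.2|} ∩
        {z | dist z.1 z.2 < R}) :=
      (isOpen_lt (continuous_const.mul (hdist.rpow_const fun _ => Or.inr hσ.le))
        ((hu.comp continuous_fst).sub (hu.comp continuous_snd)).abs).inter
        (isOpen_lt hdist continuous_const)
    obtain ⟨η, hη, hsub⟩ :=
      Metric.isOpen_iff.1 hopen (x₀, y₀) ⟨h₀, show dist x₀ y₀ < R from lt_add_one _⟩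
    refine ⟨η, hη, fun x hx y hy => (hsub ?_ : (x, y) ∈ _)⟩
    rw [← ball_prod_same]
    exact ⟨hx, hy⟩
  have hbox_pos : 0 < ENNReal.ofReal (R ^ (-s)) * μ (ball y₀ η) * μ (ball x₀ η) := by
    have hR : 0 < R := by positivity
    simp only [ENNReal.mul_pos_iff, ENNReal.ofReal_pos, Real.rpow_pos_of_pos hR,
      measure_ball_pos μ _ hη, and_self]
  obtain ⟨k, -, hk, hkbox⟩ := ENNReal.lt_iff_exists_real_btwn.1 hbox_pos
  refine ⟨k, ENNReal.ofReal_pos.1 hk, fun p hp => ?_⟩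
  have hpoint : ∀ x ∈ ball x₀ η, ∀ y ∈ ball y₀ η, ENNReal.ofReal (c ^ p * R ^ (-s)) ≤
      ENNReal.ofReal (|u x - u y| ^ p / dist x y ^ (s + σ * p)) := by
    intro x hx y hy
    obtain ⟨hlt, hR⟩ := hball x hx y hy
    have hd : 0 < dist x y := dist_nonneg.lt_of_ne fun hd => by
      have := hH x y
      rw [← hd, Real.zero_rpow hσ.ne', mul_zero] at this hlt
      linarith
    exact ENNReal.ofReal_le_ofReal <|
      Real.mul_rpow_neg_le_rpow_div_rpow hc hd hlt.le hR.le hs hp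
  calc ENNReal.ofReal (c ^ p * k)
      ≤ ENNReal.ofReal (c ^ p) * (ENNReal.ofReal (R ^ (-s)) * μ (ball y₀ η) * μ (ball x₀ η)) := by
        rw [ENNReal.ofReal_mul (by positivity)]
        gcongr
    _ = ENNReal.ofReal (c ^ p * R ^ (-s)) * μ (ball y₀ η) * μ (ball x₀ η) := by
        rw [ENNReal.ofReal_mul (by positivity)]
        ring
    _ ≤ gagliardoIntegral μ u s σ p :=
        mul_measure_mul_measure_le_lintegral_lintegral measurableSet_ball measurableSet_ball hpoint

lemma eventually_lt_gagliardoIntegral_rpow (hσ : 0 < σ) (hs : 0 ≤ s)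
    (hH : ∀ x y, |u x - u y| ≤ H * dist x y ^ σ) {b : ℝ≥0∞}
    (hb : b < ENNReal.ofReal (holderSeminorm u σ)) :
    ∀ᶠ p in atTop, b < gagliardoIntegral μ u s σ p ^ (1 / p) := by
  obtain ⟨c, hc, hbc, hcu⟩ := ENNReal.lt_iff_exists_real_btwn.1 hb
  obtain ⟨x₀, y₀, h₀⟩ :=
    exists_mul_rpow_lt_of_lt_holderSeminorm hc ((ENNReal.ofReal_lt_ofReal_iff'.1 hcu).1)
  obtain ⟨k, hk, hle⟩ := exists_pos_ofReal_mul_le_gagliardoIntegral μ hσ hs hH hc h₀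
  have hlim := (ENNReal.continuous_ofReal.tendsto c).comp
    (Real.tendsto_rpow_sub_mul_rpow_one_div hc 0 hk)
  filter_upwards [hlim.eventually (eventually_gt_nhds hbc), eventually_gt_atTop 0] with p hlt hp
  refine hlt.trans_le ?_
  rw [Function.comp_apply, sub_zero,
    ← ENNReal.ofReal_rpow_of_nonneg (by positivity) (by positivity)]
  exact ENNReal.rpow_le_rpow (hle p hp.le) (by positivity)

end Gagliardo

theorem stmt_13_general {N : ℕ}
    (σ : ℝ) (hσ0 : 0 < σ)
    (u : EuclideanSpace ℝ (Fin N) → ℝ)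
    (Hs : ℝ)
    (hHs : Hs = sSup {q : ℝ | ∃ x y, x ≠ y ∧ q = |u x - u y| / dist x y ^ σ})
    (hHolder : ∀ x y, |u x - u y| ≤ Hs * dist x y ^ σ)
    (q : ℝ) (hq : 1 < q)
    (hGq : (∫⁻ x, ∫⁻ y,
        ENNReal.ofReal (|u x - u y| ^ q / dist x y ^ ((N : ℝ) + σ * q))) < ⊤) :
    (∀ p : ℝ, q ≤ p → (∫⁻ x, ∫⁻ y,
        ENNReal.ofReal (|u x - u y| ^ p / dist x y ^ ((N : ℝ) + σ * p))) < ⊤) ∧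
    Tendsto (fun p : ℝ => (∫⁻ x, ∫⁻ y,
        ENNReal.ofReal (|u x - u y| ^ p / dist x y ^ ((N : ℝ) + σ * p))) ^ (1 / p))
      atTop (nhds (ENNReal.ofReal Hs)) := by
  have hq₀ : 0 < q := by linarith
  have hHs₀ : 0 ≤ Hs := hHs ▸ holderSeminorm_nonneg u σ
  refine ⟨fun p hqp => (gagliardoIntegral_le_mul volume hσ0 hHolder hq₀ hqp).trans_lt
    (ENNReal.mul_lt_top ENNReal.ofReal_lt_top hGq), tendsto_order.2 ⟨fun b hb => ?_,
    fun b hb => eventually_gagliardoIntegral_rpow_lt volume hσ0 hHs₀ hHolder hq₀ hGq.ne hb⟩⟩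
  rw [hHs] at hb
  exact eventually_lt_gagliardoIntegral_rpow volume hσ0 N.cast_nonneg hHolder hb

theorem stmt_13 {N : ℕ} (Ω : Set (EuclideanSpace ℝ (Fin N)))
    (hΩm : MeasurableSet Ω) (hΩb : Bornology.IsBounded Ω)
    (σ : ℝ) (hσ0 : 0 < σ) (hσ1 : σ < 1)
    (u : EuclideanSpace ℝ (Fin N) → ℝ)
    (hu0 : ∀ x, x ∉ Ω → u x = 0)
    (Hs : ℝ)
    (hHs : Hs = sSup {q : ℝ | ∃ x y, x ≠ y ∧ q = |u x - u y| / dist x y ^ σ})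
    (hHolder : ∀ x y, |u x - u y| ≤ Hs * dist x y ^ σ)
    (q : ℝ) (hq : 1 < q)
    (hGq : (∫⁻ x, ∫⁻ y,
        ENNReal.ofReal (|u x - u y| ^ q / dist x y ^ ((N : ℝ) + σ * q))) < ⊤) :
    (∀ p : ℝ, q ≤ p → (∫⁻ x, ∫⁻ y,
        ENNReal.ofReal (|u x - u y| ^ p / dist x y ^ ((N : ℝ) + σ * p))) < ⊤) ∧
    Tendsto (fun p : ℝ => (∫⁻ x, ∫⁻ y,
        ENNReal.ofReal (|u x - u y| ^ p / dist x y ^ ((N : ℝ) + σ * p))) ^ (1 / p))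
      atTop (nhds (ENNReal.ofReal Hs)) :=
  stmt_13_general σ hσ0 u Hs hHs hHolder q hq hGq
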